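/- Let X_N be exchangeable {0,1}-valued with γ = ΣX_i having a distribution symmetric about N/2. If γ is tighter than the Binomial(N,1/2), i.e., P(γ=i)/P(γ=i-1) > (N-i+1)/i for all 1 ≤ i ≤ ⌊N/2⌋, then for the first-success time M = min{i ≤ N : X_i = 1}, one has P(M = m | M ≥ m) > 1/2 for every m = 2,...,N. -/

import Mathlib

open Finset

/-- number of 1's (trues) in a 0-1 vector -/
def cnt {n : ℕ} (x : Fin n → Bool) : ℕ := (Finset.univ.filter fun i => x i = true).card

/-- P(γ = k): probability that the total count of 1's equals k -/
def gam (N : ℕ) (p : (Fin N → Bool) → ℝ) (k : ℕ) : ℝ :=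
  ∑ y : Fin N → Bool, if cnt y = k then p y else 0

/-- P(X_1 = x_1, ..., X_n = x_n): probability of observing the prefix x -/
def pref (N : ℕ) (p : (Fin N → Bool) → ℝ) {n : ℕ} (hn : n ≤ N) (x : Fin n → Bool) : ℝ :=
  ∑ y : Fin N → Bool, if (∀ i : Fin n, y (Fin.castLE hn i) = x i) then p y else 0

/-!
By exchangeability `p` depends only on the number of ones, `p y = q (cnt y)` with
`q = seqProb N p`; hence `P(γ = k) = C(N, k) q k` and a prefix of `n` zeros has probability
`∑ₖ C(N - n, k) q k`. Symmetry of `γ` makes `q` symmetric about `N / 2`, and tightness says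
exactly that `q` increases strictly on `[0, N / 2]`.

With `ℓ = N - m`, Pascal's rule gives `P(M ≥ m) - 2 P(M > m) = ∑ⱼ C(ℓ, j) (q (j + 1) - q j)`.
The increments `q (j + 1) - q j` are antisymmetric under `j ↦ N - 1 - j`, and `ℓ < N - 1`, so
pairing `j` with `N - 1 - j` gives terms `(C(ℓ, j) - C(ℓ, N - 1 - j)) (q (j + 1) - q j) ≥ 0`, the
one with `j = 0` being positive. Hence `P(M = m) = P(M ≥ m) - P(M > m) > P(M ≥ m) / 2`.
-/

theorem Equiv.Perm.exists_comp_eq_of_card_fiber_eq {ι α : Type*} [Fintype ι] [DecidableEq α]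
    {f g : ι → α} (h : ∀ a, Fintype.card {i // f i = a} = Fintype.card {i // g i = a}) :
    ∃ σ : Equiv.Perm ι, f ∘ σ = g :=
  ⟨Equiv.ofFiberEquiv fun a => Fintype.equivOfCardEq (h a).symm,
    funext <| Equiv.ofFiberEquiv_map _⟩

theorem Fin.snoc_const_self {α : Type*} {n : ℕ} (a : α) :
    (Fin.snoc (fun _ => a : Fin n → α) a : Fin (n + 1) → α) = fun _ => a := by
  funext i
  induction i using Fin.lastCases <;> simp

theorem card_filter_eq_false_outside_and_card_eq {ι : Type*} [Fintype ι] [DecidableEq ι]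
    (s : Finset ι) (k : ℕ) :
    #{y : ι → Bool | (∀ i ∉ s, y i = false) ∧ #{i | y i = true} = k} = (#s).choose k := by
  rw [← card_powersetCard]
  refine card_bij' (fun y _ => ({i | y i = true} : Finset ι)) (fun t _ i => decide (i ∈ t))
    (fun y hy => ?_) (fun t ht => ?_) (fun y _ => funext fun i => by simp)
    (fun t _ => by ext i; simp)
  · simp only [mem_filter, mem_univ, true_and] at hy
    refine mem_powersetCard.2 ⟨fun i hi => ?_, hy.2⟩
    by_contra h
    simp_all
  · rw [mem_powersetCard] at ht
    simp only [mem_filter, mem_univ, true_and, decide_eq_true_eq, decide_eq_false_iff_not]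
    exact ⟨fun i hi hit => hi (ht.1 hit), by simpa using ht.2⟩

namespace Nat

theorem choose_le_choose_succ_of_two_mul_lt {n k : ℕ} (hk : 2 * k < n) :
    n.choose k ≤ n.choose (k + 1) := by
  refine Nat.le_of_mul_le_mul_right ?_ k.succ_pos
  rw [Nat.choose_succ_right_eq]
  exact Nat.mul_le_mul_left _ (by omega)

theorem choose_le_choose_of_le_of_two_mul_le {n r s : ℕ} (hrs : r ≤ s) (hs : 2 * s ≤ n) :
    n.choose r ≤ n.choose s := by
  induction s, hrs using Nat.le_induction with
  | base => rfl
  | succ s _ ih => exact (ih (by omega)).trans (choose_le_choose_succ_of_two_mul_lt (by omega))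

theorem choose_le_choose_of_le_of_le_add {n a b : ℕ} (hab : a ≤ b) (hn : n ≤ a + b) :
    n.choose b ≤ n.choose a := by
  rcases lt_or_ge n b with hb | hb
  · simp [Nat.choose_eq_zero_of_lt hb]
  rw [← Nat.choose_symm hb]
  rcases le_or_gt (2 * a) n with ha | ha
  · exact choose_le_choose_of_le_of_two_mul_le (by omega) ha
  · rw [← Nat.choose_symm (hab.trans hb)]
    exact choose_le_choose_of_le_of_two_mul_le (by omega) (by omega)

end Nat

theorem sum_range_mul_pos_of_antisymm {K : ℕ} {c d : ℕ → ℝ}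
    (hd : ∀ j ≤ K, d (K - j) = -d j) (hd_pos : ∀ j, 2 * j < K → 0 < d j)
    (hc : ∀ j, 2 * j < K → c (K - j) ≤ c j) (hc_end : c K < c 0) :
    0 < ∑ j ∈ range (K + 1), c j * d j := by
  have hK : 0 < K := Nat.pos_of_ne_zero fun h => by simp [h] at hc_end
  have hdouble : 2 * ∑ j ∈ range (K + 1), c j * d j =
      ∑ j ∈ range (K + 1), (c j - c (K - j)) * d j := by
    conv_lhs => rw [two_mul]; enter [2]; rw [← sum_range_reflect]
    rw [← sum_add_distrib]
    refine sum_congr rfl fun j hj => ?_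
    rw [Nat.add_sub_cancel, hd j (by simpa [Nat.lt_succ_iff] using hj)]
    ring
  suffices 0 < ∑ j ∈ range (K + 1), (c j - c (K - j)) * d j by linarith
  refine sum_pos' (fun j hj => ?_) ⟨0, by simp, ?_⟩
  · have hjK : j ≤ K := Nat.lt_succ_iff.1 (mem_range.1 hj)
    rcases lt_trichotomy (2 * j) K with hlt | heq | hgt
    · exact mul_nonneg (sub_nonneg.2 (hc j hlt)) (hd_pos j hlt).le
    · rw [show K - j = j by omega, sub_self, zero_mul]
    · have hj' : 2 * (K - j) < K := by omega
      have hdj : d j = -d (K - j) := by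
        rw [← hd (K - j) (Nat.sub_le K j), Nat.sub_sub_self hjK]
      have hcj : c j ≤ c (K - j) := by simpa [Nat.sub_sub_self hjK] using hc (K - j) hj'
      rw [hdj, mul_neg, ← neg_mul, neg_sub]
      exact mul_nonneg (sub_nonneg.2 hcj) (hd_pos _ hj').le
  · simpa using mul_pos (sub_pos.2 hc_end) (hd_pos 0 hK)

theorem sum_range_choose_succ_mul {n L : ℕ} (hn : n < L) (g : ℕ → ℝ) :
    ∑ k ∈ range (L + 1), ((n + 1).choose k : ℝ) * g k =
      ∑ k ∈ range L, (n.choose k : ℝ) * (g k + g (k + 1)) := by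
  have hshift : ∑ k ∈ range L, (n.choose k : ℝ) * g k =
      ∑ k ∈ range L, (n.choose (k + 1) : ℝ) * g (k + 1) + g 0 := by
    have h := sum_range_succ' (fun k => (n.choose k : ℝ) * g k) L
    rw [sum_range_succ, Nat.choose_eq_zero_of_lt hn] at h
    simpa using h
  simp only [mul_add, sum_add_distrib]
  rw [sum_range_succ', hshift]
  simp only [Nat.choose_succ_succ', Nat.cast_add, add_mul, sum_add_distrib, Nat.choose_zero_right,
    Nat.cast_one, one_mul]
  ring

theorem two_mul_sum_choose_mul_lt {N n : ℕ} (hn : n + 2 ≤ N) {g : ℕ → ℝ}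
    (hsymm : ∀ j ≤ N, g (N - j) = g j) (hinc : ∀ j, 2 * j + 2 ≤ N → g j < g (j + 1)) :
    2 * ∑ k ∈ range (N + 1), (n.choose k : ℝ) * g k <
      ∑ k ∈ range (N + 1), ((n + 1).choose k : ℝ) * g k := by
  obtain ⟨K, rfl⟩ : ∃ K, N = K + 1 := ⟨N - 1, by omega⟩
  have hpos := sum_range_mul_pos_of_antisymm (K := K) (c := fun j => (n.choose j : ℝ))
    (d := fun j => g (j + 1) - g j) (fun j hj => ?_) (fun j hj => sub_pos.2 (hinc j (by omega)))
    (fun j hj => ?_) ?_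
  · rw [sum_range_choose_succ_mul (by omega), sum_range_succ _ (K + 1),
      Nat.choose_eq_zero_of_lt (by omega : n < K + 1), ← sub_pos]
    convert hpos using 1
    simp only [Nat.cast_zero, zero_mul, add_zero, mul_sum, ← sum_sub_distrib]
    exact sum_congr rfl fun k _ => by ring
  · rw [← hsymm j (by omega), ← hsymm (j + 1) (by omega),
      show K + 1 - j = K - j + 1 by omega, show K + 1 - (j + 1) = K - j by omega]
    ring
  · exact_mod_cast Nat.choose_le_choose_of_le_of_le_add (by omega) (by omega)
  · simp [Nat.choose_eq_zero_of_lt (by omega : n < K)]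

def seqProb (N : ℕ) (p : (Fin N → Bool) → ℝ) (k : ℕ) : ℝ :=
  p fun i : Fin N => decide (i.val < k)

section Exchangeable

variable {N : ℕ} {p : (Fin N → Bool) → ℝ}

theorem cnt_le (y : Fin N → Bool) : cnt y ≤ N :=
  (card_filter_le _ _).trans_eq (card_fin N)

theorem cnt_decide_lt {k : ℕ} (hk : k ≤ N) : cnt (fun i : Fin N => decide (i.val < k)) = k := by
  simp [cnt, Fin.card_filter_val_lt, hk]

theorem card_subtype_eq_false_eq_sub_cnt (y : Fin N → Bool) :
    Fintype.card {i // y i = false} = N - cnt y := by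
  simp [Fintype.card_subtype, cnt, ← Bool.not_eq_true, filter_not, card_sdiff]

theorem exists_perm_comp_eq_of_cnt_eq {y z : Fin N → Bool} (h : cnt y = cnt z) :
    ∃ σ : Equiv.Perm (Fin N), y ∘ σ = z := by
  refine Equiv.Perm.exists_comp_eq_of_card_fiber_eq fun b => ?_
  cases b
  · rw [card_subtype_eq_false_eq_sub_cnt, card_subtype_eq_false_eq_sub_cnt, h]
  · simpa only [Fintype.card_subtype, cnt] using h

theorem apply_eq_of_cnt_eq
    (hexch : ∀ σ : Equiv.Perm (Fin N), ∀ y : Fin N → Bool, p (y ∘ σ) = p y)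
    {y z : Fin N → Bool} (h : cnt y = cnt z) : p y = p z := by
  obtain ⟨σ, rfl⟩ := exists_perm_comp_eq_of_cnt_eq h
  exact (hexch σ y).symm

theorem apply_eq_seqProb_cnt
    (hexch : ∀ σ : Equiv.Perm (Fin N), ∀ y : Fin N → Bool, p (y ∘ σ) = p y)
    (y : Fin N → Bool) : p y = seqProb N p (cnt y) :=
  apply_eq_of_cnt_eq hexch (cnt_decide_lt (cnt_le y)).symm

theorem card_prefix_false_and_cnt_eq {n : ℕ} (hn : n ≤ N) (k : ℕ) :
    #{y : Fin N → Bool | (∀ i : Fin n, y (Fin.castLE hn i) = false) ∧ cnt y = k} =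
      (N - n).choose k := by
  have hfree : #(({i | i.val < n} : Finset (Fin N))ᶜ) = N - n := by
    rw [card_compl, Fintype.card_fin, Fin.card_filter_val_lt, min_eq_right hn]
  rw [← hfree]
  convert card_filter_eq_false_outside_and_card_eq (ι := Fin N) _ k using 2
  ext y
  simp only [mem_filter, mem_univ, true_and, mem_compl, not_not]
  apply and_congr_left'
  exact ⟨fun h i hi => h ⟨i, hi⟩, fun h i => h _ i.isLt⟩

theorem pref_false_eq_sum
    (hexch : ∀ σ : Equiv.Perm (Fin N), ∀ y : Fin N → Bool, p (y ∘ σ) = p y) {n : ℕ} (hn : n ≤ N) :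
    pref N p hn (fun _ => false) =
      ∑ k ∈ range (N + 1), ((N - n).choose k : ℝ) * seqProb N p k := by
  have hcnt : ∀ y ∈ ({y | ∀ i : Fin n, y (Fin.castLE hn i) = false} : Finset (Fin N → Bool)),
      cnt y ∈ range (N + 1) := fun y _ => mem_range.2 (Nat.lt_succ_of_le (cnt_le y))
  rw [pref, ← sum_filter, sum_congr rfl fun y _ => apply_eq_seqProb_cnt hexch y,
    ← sum_fiberwise_of_maps_to' hcnt]
  refine sum_congr rfl fun k _ => ?_
  rw [sum_const, nsmul_eq_mul, filter_filter, card_prefix_false_and_cnt_eq]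

theorem gam_eq_choose_mul
    (hexch : ∀ σ : Equiv.Perm (Fin N), ∀ y : Fin N → Bool, p (y ∘ σ) = p y) (k : ℕ) :
    gam N p k = N.choose k * seqProb N p k := by
  have hcard : #{y : Fin N → Bool | cnt y = k} = N.choose k := by
    simpa using card_prefix_false_and_cnt_eq (Nat.zero_le N) k
  rw [gam, ← sum_filter,
    sum_congr rfl fun y hy => by rw [apply_eq_seqProb_cnt hexch y, (mem_filter.1 hy).2],
    sum_const, nsmul_eq_mul, hcard]

theorem seqProb_sub_eq
    (hexch : ∀ σ : Equiv.Perm (Fin N), ∀ y : Fin N → Bool, p (y ∘ σ) = p y)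
    (hsymm : ∀ i ≤ N, gam N p i = gam N p (N - i)) {j : ℕ} (hj : j ≤ N) :
    seqProb N p (N - j) = seqProb N p j := by
  have h := hsymm j hj
  rw [gam_eq_choose_mul hexch, gam_eq_choose_mul hexch, Nat.choose_symm hj] at h
  exact (mul_left_cancel₀ (by exact_mod_cast (Nat.choose_pos hj).ne') h).symm

theorem seqProb_lt_seqProb_succ (hnn : ∀ y, 0 ≤ p y)
    (hexch : ∀ σ : Equiv.Perm (Fin N), ∀ y : Fin N → Bool, p (y ∘ σ) = p y) {j : ℕ} (hj : j < N)
    (hratio : ((N - j : ℕ) : ℝ) / (j + 1) < gam N p (j + 1) / gam N p j) :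
    seqProb N p j < seqProb N p (j + 1) := by
  have hpascal : (N.choose (j + 1) : ℝ) * (j + 1) = N.choose j * (N - j : ℕ) := by
    exact_mod_cast Nat.choose_succ_right_eq N j
  have hratio_pos : (0 : ℝ) < ((N - j : ℕ) : ℝ) / (j + 1) := by
    have : (0 : ℝ) < (N - j : ℕ) := by exact_mod_cast Nat.sub_pos_of_lt hj
    positivity
  have hchoose : (0 : ℝ) < N.choose j := by exact_mod_cast Nat.choose_pos hj.le
  rw [gam_eq_choose_mul hexch, gam_eq_choose_mul hexch] at hratio
  have hnonneg : 0 ≤ seqProb N p j := hnn _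
  rcases hnonneg.eq_or_lt with hzero | hpos
  · rw [← hzero, mul_zero, div_zero] at hratio
    linarith
  · rw [div_lt_div_iff₀ (by positivity) (by positivity)] at hratio
    refine lt_of_mul_lt_mul_left (a := (N.choose (j + 1) : ℝ) * (j + 1)) ?_ (by positivity)
    calc (N.choose (j + 1) : ℝ) * (j + 1) * seqProb N p j
        = (N - j : ℕ) * (N.choose j * seqProb N p j) := by rw [hpascal]; ring
      _ < N.choose (j + 1) * seqProb N p (j + 1) * (j + 1) := hratio
      _ = _ := by ring

theorem pref_snoc_true_add_pref_snoc_false {n : ℕ} (hn : n + 1 ≤ N) (x : Fin n → Bool) :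
    pref N p hn (Fin.snoc x true) + pref N p hn (Fin.snoc x false) =
      pref N p (Nat.le_of_succ_le hn) x := by
  simp only [pref, ← sum_add_distrib]
  refine sum_congr rfl fun y _ => ?_
  have hsplit : ∀ b, (∀ i, y (Fin.castLE hn i) = Fin.snoc x b i) ↔
      (∀ i, y (Fin.castLE (Nat.le_of_succ_le hn) i) = x i) ∧ y (Fin.castLE hn (Fin.last n)) = b :=
    fun b => by simp [Fin.forall_fin_succ']
  simp only [hsplit]
  by_cases hx : ∀ i, y (Fin.castLE (Nat.le_of_succ_le hn) i) = x i <;>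
    cases y (Fin.castLE hn (Fin.last n)) <;> simp [hx]

end Exchangeable

/-- Statement: if γ is tighter than the Binomial(N,1/2), then for the first-success time M,
P(M = m | M ≥ m) > 1/2 for every m = 2,...,N. -/
theorem tighter_first_success (N : ℕ) (p : (Fin N → Bool) → ℝ)
    (hnn : ∀ y, 0 ≤ p y)
    (hexch : ∀ σ : Equiv.Perm (Fin N), ∀ y : Fin N → Bool, p (y ∘ σ) = p y)
    (hsymm : ∀ i ≤ N, gam N p i = gam N p (N - i))
    (htighter : ∀ i : ℕ, 1 ≤ i → i ≤ N / 2 →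
      gam N p i / gam N p (i - 1) > ((N - i + 1 : ℕ) : ℝ) / (i : ℝ)) :
    ∀ m : ℕ, ∀ _h2 : 2 ≤ m, ∀ _hN : m ≤ N,
      0 < pref N p (show m - 1 ≤ N by omega) (fun _ => false) →
      pref N p (show m - 1 + 1 ≤ N by omega)
          (Fin.snoc (fun _ => false : Fin (m - 1) → Bool) true) /
        pref N p (show m - 1 ≤ N by omega) (fun _ => false) > 1 / 2 := by
  intro m hm2 hmN hpos
  have hinc : ∀ j, 2 * j + 2 ≤ N → seqProb N p j < seqProb N p (j + 1) := fun j hj => by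
    refine seqProb_lt_seqProb_succ hnn hexch (by omega) ?_
    have h := htighter (j + 1) (by omega) (by omega)
    rwa [show N - (j + 1) + 1 = N - j by omega, Nat.add_sub_cancel, Nat.cast_succ] at h
  have hsplit := pref_snoc_true_add_pref_snoc_false (p := p) (show m - 1 + 1 ≤ N by omega)
    (fun _ => false)
  rw [Fin.snoc_const_self] at hsplit
  have hhalf : 2 * pref N p (show m - 1 + 1 ≤ N by omega) (fun _ => false) <
      pref N p (show m - 1 ≤ N by omega) (fun _ => false) := by
    rw [pref_false_eq_sum hexch, pref_false_eq_sum hexch,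
      show N - (m - 1) = N - (m - 1 + 1) + 1 by omega]
    exact two_mul_sum_choose_mul_lt (by omega) (fun j hj => seqProb_sub_eq hexch hsymm hj) hinc
  rw [gt_iff_lt, lt_div_iff₀ hpos]
  linarith
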